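/- Let A ∈ ℂ^{n×n}. A Hermitian positive definite matrix X satisfies X + A^* (conj X)⁻¹ A = Iₙ if and only if the real symmetric positive definite matrix W = X^♥ satisfies W + (A^◊)ᵀ W⁻¹ A^◊ = I_{2n}. -/

import Mathlib

/-!
`M ↦ M^♥` is the realification of complex matrices: it is additive, multiplicative, unital and
injective, so it commutes with inversion, and it sends `Mᴴ` to the transpose. Entrywise conjugation
becomes conjugation by the block swap `J = [[0, I], [I, 0]]`, and `A^◊ = J A^♥`. Therefore
`(A^◊)ᵀ (X^♥)⁻¹ A^◊ = (Aᴴ)^♥ J (X^♥)⁻¹ J A^♥ = (Aᴴ (conj X)⁻¹ A)^♥`, so the real equation is the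
image of the complex one under the injective map `♥`.
-/

open Matrix
open scoped ComplexOrder

/-- For a complex matrix `A = A₁ + A₂ i`, the real block matrix `[[A₁, -A₂], [A₂, A₁]]`. -/
noncomputable def heart {n m : ℕ} (A : Matrix (Fin n) (Fin m) ℂ) :
    Matrix (Fin n ⊕ Fin n) (Fin m ⊕ Fin m) ℝ :=
  Matrix.fromBlocks (A.map Complex.re) (-(A.map Complex.im))
    (A.map Complex.im) (A.map Complex.re)

/-- For a complex matrix `A = A₁ + A₂ i`, the real block matrix `[[A₂, A₁], [A₁, -A₂]]`. -/
noncomputable def diam {n m : ℕ} (A : Matrix (Fin n) (Fin m) ℂ) :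
    Matrix (Fin n ⊕ Fin n) (Fin m ⊕ Fin m) ℝ :=
  Matrix.fromBlocks (A.map Complex.im) (A.map Complex.re)
    (A.map Complex.re) (-(A.map Complex.im))

section BlockSwap

variable (l R : Type*) [DecidableEq l] [Zero R] [One R]

def blockSwap : Matrix (l ⊕ l) (l ⊕ l) R :=
  fromBlocks 0 1 1 0

lemma blockSwap_transpose : (blockSwap l R)ᵀ = blockSwap l R := by
  simp [blockSwap, fromBlocks_transpose]

end BlockSwap

section Heart

variable {n m k : ℕ}

lemma heart_add (A B : Matrix (Fin n) (Fin m) ℂ) : heart (A + B) = heart A + heart B := by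
  ext (i | i) (j | j) <;> simp [heart, add_comm]

lemma heart_one : heart (1 : Matrix (Fin n) (Fin n) ℂ) = 1 := by
  rw [heart, ← fromBlocks_one]
  ext (i | i) (j | j) <;> by_cases h : i = j <;> simp [one_apply, h]

lemma heart_mul (A : Matrix (Fin n) (Fin m) ℂ) (B : Matrix (Fin m) (Fin k) ℂ) :
    heart (A * B) = heart A * heart B := by
  rw [heart, heart, heart, fromBlocks_multiply]
  ext (i | i) (j | j) <;>
    simp [mul_apply, Complex.mul_re, Complex.mul_im, Finset.sum_add_distrib,
      Finset.sum_sub_distrib] <;> ring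

lemma heart_injective : Function.Injective (heart : Matrix (Fin n) (Fin m) ℂ → _) := by
  intro A B h
  ext i j : 1
  apply Complex.ext
  · simpa [heart] using congrFun₂ h (.inl i) (.inl j)
  · simpa [heart] using congrFun₂ h (.inr i) (.inl j)

lemma transpose_heart (A : Matrix (Fin n) (Fin m) ℂ) : (heart A)ᵀ = heart Aᴴ := by
  rw [heart, heart, fromBlocks_transpose]
  ext (i | i) (j | j) <;> simp [conjTranspose_apply]

lemma diam_eq_blockSwap_mul_heart (A : Matrix (Fin n) (Fin m) ℂ) :
    diam A = blockSwap (Fin n) ℝ * heart A := by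
  simp [diam, blockSwap, heart, fromBlocks_multiply]

lemma heart_map_conj (A : Matrix (Fin n) (Fin m) ℂ) :
    heart (A.map (starRingEnd ℂ)) = blockSwap (Fin n) ℝ * heart A * blockSwap (Fin m) ℝ := by
  rw [heart, heart, blockSwap, blockSwap, fromBlocks_multiply, fromBlocks_multiply]
  ext (i | i) (j | j) <;> simp

lemma heart_inv {X : Matrix (Fin n) (Fin n) ℂ} (hX : IsUnit X.det) :
    heart X⁻¹ = (heart X)⁻¹ :=
  (inv_eq_right_inv (by rw [← heart_mul, mul_nonsing_inv X hX, heart_one])).symm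

lemma map_conj_inv (X : Matrix (Fin n) (Fin n) ℂ) :
    (X.map (starRingEnd ℂ))⁻¹ = X⁻¹.map (starRingEnd ℂ) := by
  change Xᴴᵀ⁻¹ = X⁻¹ᴴᵀ
  rw [← transpose_nonsing_inv, conjTranspose_nonsing_inv]

lemma heart_map_conj_inv {X : Matrix (Fin n) (Fin n) ℂ} (hX : IsUnit X.det) :
    heart (X.map (starRingEnd ℂ))⁻¹ =
      blockSwap (Fin n) ℝ * (heart X)⁻¹ * blockSwap (Fin n) ℝ := by
  rw [map_conj_inv, heart_map_conj, heart_inv hX]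

lemma transpose_diam_mul_inv_heart_mul_diam {X : Matrix (Fin n) (Fin n) ℂ} (hX : IsUnit X.det)
    (A : Matrix (Fin n) (Fin m) ℂ) :
    (diam A)ᵀ * (heart X)⁻¹ * diam A = heart (Aᴴ * (X.map (starRingEnd ℂ))⁻¹ * A) := by
  rw [heart_mul, heart_mul, heart_map_conj_inv hX, diam_eq_blockSwap_mul_heart, transpose_mul,
    blockSwap_transpose, transpose_heart]
  simp only [Matrix.mul_assoc]

end Heart

theorem eq_iff_real_eq {n : ℕ} (A X : Matrix (Fin n) (Fin n) ℂ) (hX : X.PosDef) :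
    X + Aᴴ * (X.map (starRingEnd ℂ))⁻¹ * A = 1 ↔
      heart X + (diam A)ᵀ * (heart X)⁻¹ * diam A = 1 := by
  rw [transpose_diam_mul_inv_heart_mul_diam ((isUnit_iff_isUnit_det X).mp hX.isUnit),
    ← heart_add, ← heart_one, heart_injective.eq_iff]
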